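/- Define F : ℝ → ℝ by F(λ) = e^λ/(e^λ − 1) − 1/λ for λ ≠ 0 and F(0) = 1/2. Then F is continuous on ℝ, strictly increasing, and satisfies lim_{λ→−∞} F(λ) = 0 and lim_{λ→+∞} F(λ) = 1; in particular F is a bijection from ℝ onto the open interval (0,1), i.e. F is the cumulative-distribution-type function of a random variable taking values in (0,1). -/

import Mathlib

/-!
With `u(λ) = (e^λ - 1 - λ)/λ²` one has `F(λ) = 1 - u(λ)/(1 + λ u(λ))` for `λ ≠ 0`, and the cubic
Taylor bound for `exp` gives `u(λ) → 1/2`, hence `F(λ) → 1/2 = F(0)`. Away from `0`,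
`F'(λ) = 1/λ² - e^λ/(e^λ - 1)²`, which is positive because `(e^λ - 1)²/e^λ = (2 sinh(λ/2))² > λ²`.
The limits at `±∞` are immediate, and a continuous strictly increasing function with limits `0` and
`1` at `∓∞` maps `ℝ` bijectively onto `(0, 1)` by the intermediate value theorem.
-/

open Filter Topology

/-- The function F(λ) = e^λ/(e^λ − 1) − 1/λ for λ ≠ 0, F(0) = 1/2. -/
noncomputable def Ffun (l : ℝ) : ℝ :=
  if l = 0 then 1 / 2 else Real.exp l / (Real.exp l - 1) - 1 / l

open Set Real

theorem StrictMono.bijOn_Ioo_of_tendsto {α β : Type*} [LinearOrder α] [TopologicalSpace α]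
    [OrderTopology α] [PreconnectedSpace α] [Nonempty α] [NoMinOrder α] [NoMaxOrder α]
    [LinearOrder β] [TopologicalSpace β] [OrderClosedTopology β]
    {f : α → β} {a b : β} (hf : StrictMono f) (hc : Continuous f)
    (hbot : Tendsto f atBot (𝓝 a)) (htop : Tendsto f atTop (𝓝 b)) :
    BijOn f univ (Ioo a b) := by
  refine ⟨fun x _ => ⟨?_, ?_⟩, hf.injective.injOn, fun y hy => ?_⟩
  · obtain ⟨x', hx'⟩ := exists_lt x
    exact (hf.monotone.le_of_tendsto hbot x').trans_lt (hf hx')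
  · obtain ⟨x', hx'⟩ := exists_gt x
    exact (hf hx').trans_le (hf.monotone.ge_of_tendsto htop x')
  · obtain ⟨x, rfl⟩ := mem_range_of_exists_le_of_exists_ge hc
      ((hbot.eventually (eventually_le_nhds hy.1)).exists)
      ((htop.eventually (eventually_ge_nhds hy.2)).exists)
    exact ⟨x, mem_univ x, rfl⟩

theorem strictMono_of_deriv_pos_of_ne {f : ℝ → ℝ} {a : ℝ} (hf : Continuous f)
    (hf' : ∀ x ≠ a, 0 < deriv f x) : StrictMono f := by
  refine StrictMonoOn.Iic_union_Ici (a := a) ?_ ?_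
  · refine strictMonoOn_of_deriv_pos (convex_Iic a) hf.continuousOn fun x hx => hf' x ?_
    rw [interior_Iic] at hx
    exact (mem_Iio.1 hx).ne
  · refine strictMonoOn_of_deriv_pos (convex_Ici a) hf.continuousOn fun x hx => hf' x ?_
    rw [interior_Ici] at hx
    exact (mem_Ioi.1 hx).ne'

namespace Real

theorem exp_sub_one_ne_zero {x : ℝ} (hx : x ≠ 0) : exp x - 1 ≠ 0 := by
  simpa [sub_eq_zero] using hx

theorem abs_exp_sub_quadratic_le {x : ℝ} (hx : |x| ≤ 1) :
    |exp x - (1 + x + x ^ 2 / 2)| ≤ 2 / 9 * |x| ^ 3 := by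
  have h := exp_bound hx (n := 3) (by norm_num)
  norm_num [Finset.sum_range_succ, Nat.factorial] at h
  linarith

theorem tendsto_exp_sub_one_sub_div_sq :
    Tendsto (fun x => (exp x - 1 - x) / x ^ 2) (𝓝[≠] 0) (𝓝 (1 / 2)) := by
  rw [tendsto_iff_norm_sub_tendsto_zero]
  have hbound : Tendsto (fun x : ℝ => 2 / 9 * |x|) (𝓝[≠] 0) (𝓝 0) := by
    simpa using ((continuous_abs.tendsto (0 : ℝ)).const_mul (2 / 9)).mono_left nhdsWithin_le_nhds
  refine squeeze_zero' (Eventually.of_forall fun _ => norm_nonneg _) ?_ hbound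
  have hsmall : ∀ᶠ x in 𝓝 (0 : ℝ), |x| ≤ 1 := by
    simpa using (continuous_abs.tendsto (0 : ℝ)).eventually (eventually_le_nhds (by simp))
  filter_upwards [self_mem_nhdsWithin, nhdsWithin_le_nhds hsmall] with x (hx : x ≠ 0) hx1
  have hsub : (exp x - 1 - x) / x ^ 2 - 1 / 2 = (exp x - (1 + x + x ^ 2 / 2)) / x ^ 2 := by
    field_simp
    ring
  rw [norm_eq_abs, hsub, abs_div, abs_pow, div_le_iff₀ (by positivity)]
  calc _ ≤ 2 / 9 * |x| ^ 3 := abs_exp_sub_quadratic_le hx1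
    _ = _ := by ring

theorem sq_mul_exp_lt_sq_exp_sub_one {x : ℝ} (hx : x ≠ 0) :
    x ^ 2 * exp x < (exp x - 1) ^ 2 := by
  have hsq : (exp x - 1) ^ 2 = (2 * sinh (x / 2)) ^ 2 * exp x := by
    have h₁ : exp (x / 2) * exp (x / 2) = exp x := by rw [← exp_add, add_halves]
    have h₂ : exp (x / 2) * exp (-(x / 2)) = 1 := by rw [← exp_add, add_neg_cancel, exp_zero]
    rw [sinh_eq, ← h₁]
    linear_combination (2 * exp (x / 2) * exp (x / 2) - 1 - exp (x / 2) * exp (-(x / 2))) * h₂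
  have hlt : x ^ 2 < (2 * sinh (x / 2)) ^ 2 := by
    rw [sq_lt_sq, abs_mul, abs_sinh, abs_two, abs_div, abs_two]
    have := self_lt_sinh_iff.2 (half_pos (abs_pos.2 hx))
    linarith
  rw [hsq]
  gcongr

end Real

theorem Ffun_of_ne {l : ℝ} (hl : l ≠ 0) : Ffun l = exp l / (exp l - 1) - 1 / l := if_neg hl

theorem Ffun_eventuallyEq {x : ℝ} (hx : x ≠ 0) :
    Ffun =ᶠ[𝓝 x] fun l => exp l / (exp l - 1) - 1 / l := by
  filter_upwards [isOpen_ne.mem_nhds hx] with l hl using Ffun_of_ne hl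

theorem Ffun_eq_one_sub {l : ℝ} (hl : l ≠ 0) :
    Ffun l = 1 - (exp l - 1 - l) / l ^ 2 / (1 + l * ((exp l - 1 - l) / l ^ 2)) := by
  have := exp_sub_one_ne_zero hl
  have : 1 + l * ((exp l - 1 - l) / l ^ 2) = (exp l - 1) / l := by field_simp; ring
  rw [Ffun_of_ne hl, this]
  field_simp
  ring

theorem continuousAt_Ffun_zero : ContinuousAt Ffun 0 := by
  have hu := tendsto_exp_sub_one_sub_div_sq
  have hl : Tendsto (fun l : ℝ => l) (𝓝[≠] 0) (𝓝 0) := nhdsWithin_le_nhds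
  have h : Tendsto (fun l => 1 - (exp l - 1 - l) / l ^ 2 / (1 + l * ((exp l - 1 - l) / l ^ 2)))
      (𝓝[≠] 0) (𝓝 (1 - 1 / 2 / (1 + 0 * (1 / 2)))) :=
    tendsto_const_nhds.sub (hu.div (tendsto_const_nhds.add (hl.mul hu)) (by norm_num))
  rw [← continuousWithinAt_compl_self, ContinuousWithinAt, show Ffun 0 = 1 / 2 from if_pos rfl]
  refine Tendsto.congr' ?_ (by convert h using 2; norm_num)
  filter_upwards [self_mem_nhdsWithin] with l hl using (Ffun_eq_one_sub hl).symm

theorem continuous_Ffun : Continuous Ffun := by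
  refine continuous_iff_continuousAt.2 fun x => ?_
  rcases eq_or_ne x 0 with rfl | hx
  · exact continuousAt_Ffun_zero
  · refine ContinuousAt.congr ?_ (Ffun_eventuallyEq hx).symm
    exact ((continuous_exp.continuousAt.div (continuous_exp.continuousAt.sub continuousAt_const)
      (exp_sub_one_ne_zero hx)).sub (continuousAt_const.div continuousAt_id hx))

theorem hasDerivAt_Ffun {x : ℝ} (hx : x ≠ 0) :
    HasDerivAt Ffun (1 / x ^ 2 - exp x / (exp x - 1) ^ 2) x := by
  have hinv : HasDerivAt (fun l : ℝ => 1 / l) (-(x ^ 2)⁻¹) x := by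
    simpa only [one_div] using hasDerivAt_inv hx
  have h := ((hasDerivAt_exp x).div ((hasDerivAt_exp x).sub_const 1) (exp_sub_one_ne_zero hx)).sub
    hinv
  refine (h.congr_of_eventuallyEq (Ffun_eventuallyEq hx)).congr_deriv ?_
  have := exp_sub_one_ne_zero hx
  field_simp
  ring

theorem strictMono_Ffun : StrictMono Ffun := by
  refine strictMono_of_deriv_pos_of_ne (a := 0) continuous_Ffun fun x hx => ?_
  have := exp_sub_one_ne_zero hx
  rw [(hasDerivAt_Ffun hx).deriv, sub_pos, div_lt_div_iff₀ (by positivity) (by positivity)]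
  linarith [sq_mul_exp_lt_sq_exp_sub_one hx]

theorem tendsto_Ffun_atBot : Tendsto Ffun atBot (𝓝 0) := by
  have h := (tendsto_exp_atBot.div (tendsto_exp_atBot.sub_const 1) (by norm_num)).sub
    tendsto_inv_atBot_zero
  rw [zero_div, sub_zero] at h
  refine h.congr' ?_
  filter_upwards [eventually_lt_atBot 0] with l hl
  rw [Ffun_of_ne hl.ne, one_div]
  rfl

theorem tendsto_Ffun_atTop : Tendsto Ffun atTop (𝓝 1) := by
  have h := ((tendsto_exp_neg_atTop_nhds_zero.const_sub 1).inv₀ (by norm_num)).sub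
    tendsto_inv_atTop_zero
  simp only [sub_zero, inv_one] at h
  refine h.congr' ?_
  filter_upwards [eventually_gt_atTop 0] with l hl
  have := exp_sub_one_ne_zero hl.ne'
  rw [Ffun_of_ne hl.ne', one_div, exp_neg]
  field_simp

/-- F is continuous on ℝ, strictly increasing, tends to 0 at −∞ and
to 1 at +∞; in particular F is a bijection from ℝ onto the open interval (0,1). -/
theorem stmt_17 :
    Continuous Ffun ∧ StrictMono Ffun ∧
    Tendsto Ffun atBot (𝓝 0) ∧ Tendsto Ffun atTop (𝓝 1) ∧
    Set.BijOn Ffun Set.univ (Set.Ioo (0 : ℝ) 1) :=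
  ⟨continuous_Ffun, strictMono_Ffun, tendsto_Ffun_atBot, tendsto_Ffun_atTop,
    strictMono_Ffun.bijOn_Ioo_of_tendsto continuous_Ffun tendsto_Ffun_atBot tendsto_Ffun_atTop⟩
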